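/- arXiv:1911.11189 — 4 statements merged into one kernel-verified Lean document; each statement's English description precedes it below -/
import Mathlib

section
/- Let X(x,y) = (1/2)(|x|^{2H} + |y|^{2H} − |x−y|^{2H}) for x, y ∈ ℝ^d and H ∈ (0,1]. Then X is a positive semidefinite kernel: for all finite collections x₁,…,x_n ∈ ℝ^d and real c₁,…,c_n, ∑_{i,j} c_i c_j X(x_i, x_j) ≥ 0. -/
/-!
For `0 < H < 1` the substitution `t ↦ r t` gives
`r ^ H = C_H⁻¹ * ∫₀^∞ t ^ (-1 - H) * (1 - exp (-(r t))) dt` with `C_H > 0`. Taking `r = ‖v‖ ^ 2`,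
the kernel becomes an integral, against a positive weight, of the kernels built in the same way
from `ψ_t v = 1 - exp (-(‖v‖ ^ 2 t))`. Each of these equals
`(1 - a x) (1 - a y) + a x a y (exp (2 t ⟪x, y⟫) - 1)` with `a v = exp (-(‖v‖ ^ 2 t))`, and is
positive semidefinite because `exp (s ⟪x, y⟫) - 1 = ∑_{m ≥ 1} s ^ m ⟪x, y⟫ ^ m / m!` is a
nonnegative combination of Hadamard powers of a Gram matrix (Schur product theorem).
For `H = 1` the kernel is the inner product itself.
-/

open MeasureTheory Set Real
open scoped RealInnerProductSpace

variable {E : Type*}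

def IsPosSemidefKernel (K : E → E → ℝ) : Prop :=
  ∀ (n : ℕ) (x : Fin n → E), (Matrix.of fun i j => K (x i) (x j)).PosSemidef

open Matrix in
theorem isPosSemidefKernel_iff {K : E → E → ℝ} :
    IsPosSemidefKernel K ↔ (∀ x y, K y x = K x y) ∧
      ∀ (n : ℕ) (x : Fin n → E) (c : Fin n → ℝ), 0 ≤ ∑ i, ∑ j, c i * c j * K (x i) (x j) := by
  have quad : ∀ {n : ℕ} (x : Fin n → E) (c : Fin n → ℝ),
      star c ⬝ᵥ (of fun i j => K (x i) (x j)) *ᵥ c = ∑ i, ∑ j, c i * c j * K (x i) (x j) := by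
    intro n x c
    simp only [dotProduct, mulVec, Finset.mul_sum, Pi.star_apply, star_trivial, of_apply]
    exact Finset.sum_congr rfl fun i _ => Finset.sum_congr rfl fun j _ => by ring
  simp only [IsPosSemidefKernel, posSemidef_iff_dotProduct_mulVec, quad]
  constructor
  · intro h
    refine ⟨fun x y => ?_, fun n x => (h n x).2⟩
    simpa using congr_fun₂ (h 2 ![x, y]).1 0 1
  · intro h n x
    exact ⟨IsHermitian.ext fun i j => by simpa using h.1 (x i) (x j), h.2 n x⟩

theorem isPosSemidefKernel_apply_mul_apply (f : E → ℝ) :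
    IsPosSemidefKernel fun x y => f x * f y := by
  intro n x
  simpa [Matrix.vecMulVec, Matrix.of_apply] using Matrix.posSemidef_vecMulVec_self_star (f ∘ x)

theorem isPosSemidefKernel_inner [SeminormedAddCommGroup E] [InnerProductSpace ℝ E] :
    IsPosSemidefKernel fun x y : E => ⟪x, y⟫ :=
  fun _ x => Matrix.posSemidef_gram ℝ x

namespace IsPosSemidefKernel

variable {K L : E → E → ℝ}

theorem add (hK : IsPosSemidefKernel K) (hL : IsPosSemidefKernel L) :
    IsPosSemidefKernel fun x y => K x y + L x y :=
  fun n x => (hK n x).add (hL n x)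

theorem const_mul (hK : IsPosSemidefKernel K) {a : ℝ} (ha : 0 ≤ a) :
    IsPosSemidefKernel fun x y => a * K x y :=
  fun n x => (hK n x).smul ha

theorem mul (hK : IsPosSemidefKernel K) (hL : IsPosSemidefKernel L) :
    IsPosSemidefKernel fun x y => K x y * L x y :=
  fun n x => (hK n x).hadamard (hL n x)

theorem pow (hK : IsPosSemidefKernel K) (m : ℕ) : IsPosSemidefKernel fun x y => K x y ^ m := by
  induction m with
  | zero => simpa using isPosSemidefKernel_apply_mul_apply fun _ : E => (1 : ℝ)
  | succ m ih => simpa only [pow_succ] using ih.mul hK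

theorem tsum {k : ℕ → E → E → ℝ} (hk : ∀ m, IsPosSemidefKernel (k m))
    (hs : ∀ x y, Summable fun m => k m x y) :
    IsPosSemidefKernel fun x y => ∑' m, k m x y := by
  simp only [isPosSemidefKernel_iff] at hk ⊢
  refine ⟨fun x y => tsum_congr fun m => (hk m).1 x y, fun n x c => ?_⟩
  exact (hasSum_sum fun i _ => hasSum_sum fun j _ => (hs _ _).hasSum.mul_left (c i * c j)).nonneg
    fun m => (hk m).2 n x c

theorem integral {α : Type*} [MeasurableSpace α] {μ : Measure α} {k : α → E → E → ℝ}
    (hk : ∀ᵐ t ∂μ, IsPosSemidefKernel (k t)) (hi : ∀ x y, Integrable (fun t => k t x y) μ) :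
    IsPosSemidefKernel fun x y => ∫ t, k t x y ∂μ := by
  simp only [isPosSemidefKernel_iff] at hk ⊢
  refine ⟨fun x y => integral_congr_ae (hk.mono fun t ht => ht.1 x y), fun n x c => ?_⟩
  have hci : ∀ i j, Integrable (fun t => c i * c j * k t (x i) (x j)) μ :=
    fun i j => (hi _ _).const_mul _
  calc 0 ≤ ∫ t, ∑ i, ∑ j, c i * c j * k t (x i) (x j) ∂μ :=
        integral_nonneg_of_ae (hk.mono fun t ht => ht.2 n x c)
    _ = _ := by
        rw [integral_finsetSum _ fun i _ => integrable_finsetSum _ fun j _ => hci i j]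
        simp_rw [integral_finsetSum _ fun j _ => hci _ j, integral_const_mul]

end IsPosSemidefKernel

open Nat in
theorem hasSum_pow_succ_div_factorial (s : ℝ) :
    HasSum (fun m : ℕ => s ^ (m + 1) / (m + 1)!) (exp s - 1) := by
  simpa [← Real.exp_eq_exp_ℝ] using
    (hasSum_nat_add_iff' 1).mpr (NormedSpace.expSeries_div_hasSum_exp s)

open Nat in
theorem isPosSemidefKernel_exp_inner_sub_one [SeminormedAddCommGroup E] [InnerProductSpace ℝ E]
    {t : ℝ} (ht : 0 ≤ t) : IsPosSemidefKernel fun x y : E => exp (t * ⟪x, y⟫) - 1 := by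
  have hsum : ∀ x y : E,
      HasSum (fun m : ℕ => t ^ (m + 1) / (m + 1)! * ⟪x, y⟫ ^ (m + 1)) (exp (t * ⟪x, y⟫) - 1) :=
    fun x y => by convert hasSum_pow_succ_div_factorial (t * ⟪x, y⟫) using 2 with m; ring
  have hK := IsPosSemidefKernel.tsum
    (fun m => (isPosSemidefKernel_inner.pow (m + 1)).const_mul (by positivity))
    fun x y => (hsum x y).summable
  simpa only [fun x y => (hsum x y).tsum_eq] using hK

/-- The covariance of a centred process `B` with `B 0 = 0` and `𝔼 (B x - B y) ^ 2 = ψ (x - y)`. -/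
noncomputable def variogramCovariance [Sub E] (ψ : E → ℝ) (x y : E) : ℝ :=
  (1 / 2) * (ψ x + ψ y - ψ (x - y))

theorem isPosSemidefKernel_variogramCovariance_one_sub_exp [SeminormedAddCommGroup E]
    [InnerProductSpace ℝ E] {t : ℝ} (ht : 0 ≤ t) :
    IsPosSemidefKernel (variogramCovariance fun v : E => 1 - exp (-(‖v‖ ^ 2 * t))) := by
  set a : E → ℝ := fun v => exp (-(‖v‖ ^ 2 * t))
  have hsub : ∀ x y : E, exp (-(‖x - y‖ ^ 2 * t)) = a x * a y * exp (2 * t * ⟪x, y⟫) := by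
    intro x y
    simp only [a, ← exp_add, norm_sub_sq_real]
    ring_nf
  have hK := ((isPosSemidefKernel_apply_mul_apply fun v => 1 - a v).add
    ((isPosSemidefKernel_apply_mul_apply a).mul
      (isPosSemidefKernel_exp_inner_sub_one (by positivity : 0 ≤ 2 * t)))).const_mul
    (by norm_num : (0 : ℝ) ≤ 1 / 2)
  convert hK using 3 with x y
  simp only [variogramCovariance, hsub]
  ring

theorem integrableOn_rpow_mul_one_sub_exp {H : ℝ} (hH0 : 0 < H) (hH1 : H < 1) {r : ℝ}
    (hr : 0 ≤ r) :
    IntegrableOn (fun t => t ^ (-1 - H) * (1 - exp (-(r * t)))) (Ioi 0) := by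
  have hmeas : AEStronglyMeasurable (fun t : ℝ => t ^ (-1 - H) * (1 - exp (-(r * t)))) := by
    fun_prop
  rw [← Ioc_union_Ioi_eq_Ioi zero_le_one]
  refine IntegrableOn.union ?_ ?_
  · have hg : IntegrableOn (fun t : ℝ => r * t ^ (-H)) (Ioc 0 1) :=
      (((intervalIntegral.integrableOn_Ioo_rpow_iff (s := -H) one_pos).mpr
        (by linarith)).congr_set_ae Ioo_ae_eq_Ioc.symm).const_mul r
    refine hg.mono' hmeas.restrict (ae_restrict_of_forall_mem measurableSet_Ioc ?_)
    rintro t ⟨ht0, -⟩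
    have h1 : 0 ≤ 1 - exp (-(r * t)) := by simp; positivity
    rw [norm_of_nonneg (by positivity)]
    calc t ^ (-1 - H) * (1 - exp (-(r * t))) ≤ t ^ (-1 - H) * (r * t) := by
          gcongr; linarith [one_sub_le_exp_neg (r * t)]
      _ = r * t ^ (-H) := by
          rw [show -H = -1 - H + 1 by ring, rpow_add_one ht0.ne']; ring
  · refine (integrableOn_Ioi_rpow_of_lt (a := -1 - H) (by linarith) one_pos).mono'
      hmeas.restrict (ae_restrict_of_forall_mem measurableSet_Ioi fun t (ht : 1 < t) => ?_)
    have h1 : 0 ≤ 1 - exp (-(r * t)) := by simp; positivity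
    have h2 : 1 - exp (-(r * t)) ≤ 1 := by linarith [exp_pos (-(r * t))]
    rw [norm_of_nonneg (by positivity)]
    exact mul_le_of_le_one_right (by positivity) h2

theorem integral_rpow_mul_one_sub_exp_mul {H : ℝ} (hH0 : 0 < H) {r : ℝ} (hr : 0 ≤ r) :
    ∫ t in Ioi 0, t ^ (-1 - H) * (1 - exp (-(r * t))) =
      r ^ H * ∫ t in Ioi 0, t ^ (-1 - H) * (1 - exp (-t)) := by
  rcases hr.eq_or_lt with rfl | hr
  · simp [zero_rpow hH0.ne']
  have hsubst : ∫ t in Ioi 0, (r * t) ^ (-1 - H) * (1 - exp (-(r * t))) =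
      r⁻¹ * ∫ t in Ioi 0, t ^ (-1 - H) * (1 - exp (-t)) := by
    simpa using integral_comp_mul_left_Ioi (fun u => u ^ (-1 - H) * (1 - exp (-u))) 0 hr
  have hfactor : ∫ t in Ioi 0, (r * t) ^ (-1 - H) * (1 - exp (-(r * t))) =
      r ^ (-1 - H) * ∫ t in Ioi 0, t ^ (-1 - H) * (1 - exp (-(r * t))) := by
    rw [← integral_const_mul]
    refine setIntegral_congr_fun measurableSet_Ioi fun t (ht : 0 < t) => ?_
    rw [mul_rpow hr.le ht.le, mul_assoc]
  rw [hfactor, rpow_sub hr, rpow_neg_one] at hsubst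
  have := (rpow_pos_of_pos hr H).ne'
  field_simp at hsubst ⊢
  linear_combination hsubst

theorem integral_rpow_mul_one_sub_exp_pos {H : ℝ} (hH0 : 0 < H) (hH1 : H < 1) :
    0 < ∫ t in Ioi 0, t ^ (-1 - H) * (1 - exp (-t)) := by
  have hpos : ∀ t ∈ Ioi (0 : ℝ), 0 < t ^ (-1 - H) * (1 - exp (-t)) := fun t (ht : 0 < t) =>
    mul_pos (rpow_pos_of_pos ht _) (by simpa using ht)
  have hint := integrableOn_rpow_mul_one_sub_exp hH0 hH1 zero_le_one
  simp only [one_mul] at hint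
  rw [setIntegral_pos_iff_support_of_nonneg_ae
    (ae_restrict_of_forall_mem measurableSet_Ioi fun t ht => (hpos t ht).le) hint]
  exact (by simp : 0 < volume (Ioi (0 : ℝ))).trans_le
    (measure_mono fun t ht => ⟨(hpos t ht).ne', ht⟩)

section Seminormed

variable [SeminormedAddCommGroup E]

theorem integrableOn_rpow_mul_variogramCovariance_one_sub_exp {H : ℝ} (hH0 : 0 < H)
    (hH1 : H < 1) (x y : E) :
    IntegrableOn (fun t => t ^ (-1 - H) *
      variogramCovariance (fun v : E => 1 - exp (-(‖v‖ ^ 2 * t))) x y) (Ioi 0) := by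
  have hI := fun v : E => integrableOn_rpow_mul_one_sub_exp hH0 hH1 (sq_nonneg ‖v‖)
  refine ((((hI x).add (hI y)).sub (hI (x - y))).const_mul (1 / 2)).congr
    (ae_of_all _ fun t => ?_)
  simp only [variogramCovariance, Pi.add_apply, Pi.sub_apply]
  ring

theorem integral_rpow_mul_variogramCovariance_one_sub_exp {H : ℝ} (hH0 : 0 < H) (hH1 : H < 1)
    (x y : E) :
    ∫ t in Ioi 0, t ^ (-1 - H) * variogramCovariance (fun v : E => 1 - exp (-(‖v‖ ^ 2 * t))) x y =
      (∫ t in Ioi 0, t ^ (-1 - H) * (1 - exp (-t))) *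
        variogramCovariance (fun v : E => ‖v‖ ^ (2 * H)) x y := by
  have hI := fun v : E => integrableOn_rpow_mul_one_sub_exp hH0 hH1 (sq_nonneg ‖v‖)
  have hpow : ∀ v : E, ‖v‖ ^ (2 * H) = (‖v‖ ^ 2) ^ H := fun v => by
    rw [rpow_mul (norm_nonneg v), rpow_two]
  calc _ = ∫ t in Ioi 0, (1 / 2) * (t ^ (-1 - H) * (1 - exp (-(‖x‖ ^ 2 * t))) +
        t ^ (-1 - H) * (1 - exp (-(‖y‖ ^ 2 * t))) -
        t ^ (-1 - H) * (1 - exp (-(‖x - y‖ ^ 2 * t)))) := by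
        simp only [variogramCovariance]; congr 1; ext t; ring
    _ = _ := by
        have hxy : IntegrableOn (fun t => t ^ (-1 - H) * (1 - exp (-(‖x‖ ^ 2 * t))) +
            t ^ (-1 - H) * (1 - exp (-(‖y‖ ^ 2 * t)))) (Ioi 0) := (hI x).add (hI y)
        rw [integral_const_mul, integral_sub hxy (hI (x - y)), integral_add (hI x) (hI y)]
        simp only [integral_rpow_mul_one_sub_exp_mul hH0 (sq_nonneg _), variogramCovariance, hpow]
        ring

end Seminormed

section InnerProduct

variable [SeminormedAddCommGroup E] [InnerProductSpace ℝ E]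

theorem variogramCovariance_norm_sq_eq_inner :
    variogramCovariance (fun v : E => ‖v‖ ^ (2 * (1 : ℝ))) = fun x y => ⟪x, y⟫ := by
  ext x y
  simp only [variogramCovariance, mul_one, rpow_two, norm_sub_sq_real]
  ring

theorem isPosSemidefKernel_variogramCovariance_norm_rpow {H : ℝ} (hH : H ∈ Ioc 0 1) :
    IsPosSemidefKernel (variogramCovariance fun v : E => ‖v‖ ^ (2 * H)) := by
  rcases hH.2.lt_or_eq with hH1 | rfl
  · set C := ∫ t in Ioi 0, t ^ (-1 - H) * (1 - exp (-t))
    have hC : 0 < C := integral_rpow_mul_one_sub_exp_pos hH.1 hH1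
    have hrep : variogramCovariance (fun v : E => ‖v‖ ^ (2 * H)) = fun x y => C⁻¹ *
        ∫ t in Ioi 0, t ^ (-1 - H) *
          variogramCovariance (fun v : E => 1 - exp (-(‖v‖ ^ 2 * t))) x y := by
      ext x y
      rw [integral_rpow_mul_variogramCovariance_one_sub_exp hH.1 hH1, inv_mul_cancel_left₀ hC.ne']
    rw [hrep]
    refine (IsPosSemidefKernel.integral ?_ ?_).const_mul (inv_nonneg.mpr hC.le)
    · exact ae_restrict_of_forall_mem measurableSet_Ioi fun t (ht : 0 < t) =>
        (isPosSemidefKernel_variogramCovariance_one_sub_exp ht.le).const_mul (rpow_nonneg ht.le _)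
    · exact integrableOn_rpow_mul_variogramCovariance_one_sub_exp hH.1 hH1
  · rw [variogramCovariance_norm_sq_eq_inner]
    exact isPosSemidefKernel_inner

end InnerProduct

theorem fBm_kernel_posSemidef_general (d : ℕ) (H : ℝ)
    (hH : H ∈ Set.Ioc (0:ℝ) 1)
    (X : EuclideanSpace ℝ (Fin d) → EuclideanSpace ℝ (Fin d) → ℝ)
    (hX : ∀ x y, X x y = (1/2) * (‖x‖ ^ (2*H) + ‖y‖ ^ (2*H) - ‖x - y‖ ^ (2*H))) :
    ∀ (n : ℕ) (x : Fin n → EuclideanSpace ℝ (Fin d)) (c : Fin n → ℝ),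
      0 ≤ ∑ i, ∑ j, c i * c j * X (x i) (x j) := by
  have hXcov : X = variogramCovariance fun v : EuclideanSpace ℝ (Fin d) => ‖v‖ ^ (2 * H) :=
    funext₂ hX
  rw [hXcov]
  exact (isPosSemidefKernel_iff.mp (isPosSemidefKernel_variogramCovariance_norm_rpow hH)).2

theorem fBm_kernel_posSemidef (d : ℕ) (hd : 1 ≤ d) (H : ℝ)
    (hH : H ∈ Set.Ioc (0:ℝ) 1)
    (X : EuclideanSpace ℝ (Fin d) → EuclideanSpace ℝ (Fin d) → ℝ)
    (hX : ∀ x y, X x y = (1/2) * (‖x‖ ^ (2*H) + ‖y‖ ^ (2*H) - ‖x - y‖ ^ (2*H))) :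
    ∀ (n : ℕ) (x : Fin n → EuclideanSpace ℝ (Fin d)) (c : Fin n → ℝ),
      0 ≤ ∑ i, ∑ j, c i * c j * X (x i) (x j) :=
  fBm_kernel_posSemidef_general d H hH X hX
end

section
/- Let d = 2 and define the map τ on a suitable open subset of ℝ² × ℝ² (with fixed x ∈ ℝ²) sending (y,z) to (g₁,g₂,h₁,h₂) with g₁ = (|x−y| − |x−z|)/2, h₁ = (|x−y| + |x−z|)/2, g₂ = (|x−y| arcsin((y₁−x₁)/|x−y|) − |x−z| arcsin((z₁−x₁)/|x−z|))/2, h₂ = (|x−y| arcsin((y₁−x₁)/|x−y|) + |x−z| arcsin((z₁−x₁)/|x−z|))/2. Then on the set g = 0 (i.e., y = z), the Jacobian determinant of the inverse map (g,h) ↦ (y,z) equals 4. -/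
/-- The inverse change of variables `(g,h) ↦ (y,z)` of the 2D stationary
phase analysis: `y = x + (h₁+g₁)(sin α', cos α')` with
`α' = (h₂+g₂)/(h₁+g₁)`, and similarly for `z` with `−g`. -/
noncomputable def tauInv (x : ℝ × ℝ) (p : Fin 4 → ℝ) : Fin 4 → ℝ :=
  ![x.1 + (p 2 + p 0) * Real.sin ((p 3 + p 1) / (p 2 + p 0)),
    x.2 + (p 2 + p 0) * Real.cos ((p 3 + p 1) / (p 2 + p 0)),
    x.1 + (p 2 - p 0) * Real.sin ((p 3 - p 1) / (p 2 - p 0)),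
    x.2 + (p 2 - p 0) * Real.cos ((p 3 - p 1) / (p 2 - p 0))]

/-!
The map factors as the linear substitution `(g, h) ↦ (h + g, h - g)`, of determinant `4`, followed
by two copies of `(u, v) ↦ u • (sin (v / u), cos (v / u))`, whose Jacobian determinant is
`-(sin² + cos²) = -1`. Hence the Jacobian determinant is `4` wherever `h₁ ± g₁ ≠ 0`.
-/

open ContinuousLinearMap

section
variable {E : Type*} [NormedAddCommGroup E] [NormedSpace ℝ E] {u v : E → ℝ}
  {u' v' : E →L[ℝ] ℝ} {p : E}

theorem HasFDerivAt.mul_sin_div (hu : HasFDerivAt u u' p) (hv : HasFDerivAt v v' p)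
    (h : u p ≠ 0) :
    HasFDerivAt (fun q => u q * Real.sin (v q / u q))
      ((Real.sin (v p / u p) - v p / u p * Real.cos (v p / u p)) • u' +
        Real.cos (v p / u p) • v') p := by
  have hdiv := hv.mul ((hasDerivAt_inv h).comp_hasFDerivAt p hu)
  refine (hu.mul hdiv.sin).congr_fderiv ?_
  ext w
  simp only [Function.comp_def, Pi.mul_apply, add_apply, smul_apply, smul_eq_mul, div_eq_mul_inv]
  field_simp
  ring

theorem HasFDerivAt.mul_cos_div (hu : HasFDerivAt u u' p) (hv : HasFDerivAt v v' p)
    (h : u p ≠ 0) :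
    HasFDerivAt (fun q => u q * Real.cos (v q / u q))
      ((Real.cos (v p / u p) + v p / u p * Real.sin (v p / u p)) • u' -
        Real.sin (v p / u p) • v') p := by
  have hdiv := hv.mul ((hasDerivAt_inv h).comp_hasFDerivAt p hu)
  refine (hu.mul hdiv.cos).congr_fderiv ?_
  ext w
  simp only [Function.comp_def, Pi.mul_apply, add_apply, sub_apply, smul_apply, smul_eq_mul,
    div_eq_mul_inv]
  field_simp
  ring

end

open Real

noncomputable def tauInvJacobian (a b : ℝ) : Matrix (Fin 4) (Fin 4) ℝ :=
  !![sin a - a * cos a, cos a, sin a - a * cos a, cos a;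
     cos a + a * sin a, -sin a, cos a + a * sin a, -sin a;
     -(sin b - b * cos b), -cos b, sin b - b * cos b, cos b;
     -(cos b + b * sin b), sin b, cos b + b * sin b, -sin b]

theorem det_tauInvJacobian (a b : ℝ) : (tauInvJacobian a b).det = 4 := by
  rw [Matrix.det_succ_row_zero, Fin.sum_univ_four]
  simp only [tauInvJacobian, Matrix.det_fin_three, Matrix.submatrix_apply, Matrix.of_apply,
    Matrix.cons_val', Matrix.cons_val_zero, Matrix.cons_val_one, Matrix.cons_val,
    Matrix.cons_val_fin_one, Fin.succAbove, Fin.castSucc_zero, Fin.castSucc_one,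
    Fin.reduceCastSucc, Fin.succ_zero_eq_one, Fin.succ_one_eq_two, Fin.reduceSucc, Fin.lt_one_iff,
    Fin.reduceLT, Fin.reduceEq, zero_lt_one, lt_self_iff_false, ↓reduceIte, Fin.isValue,
    Fin.coe_ofNat_eq_mod, Nat.zero_mod, Nat.one_mod, pow_zero, pow_one]
  linear_combination (4 * (sin b ^ 2 + cos b ^ 2)) * sin_sq_add_cos_sq a + 4 * sin_sq_add_cos_sq b

theorem jacobian_tauInv (x : ℝ × ℝ) {p : Fin 4 → ℝ} (hp : p 2 + p 0 ≠ 0)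
    (hm : p 2 - p 0 ≠ 0) :
    Matrix.of (fun i j : Fin 4 => fderiv ℝ (tauInv x) p (Pi.single j 1) i) =
      tauInvJacobian ((p 3 + p 1) / (p 2 + p 0)) ((p 3 - p 1) / (p 2 - p 0)) := by
  have hu₁ := (hasFDerivAt_apply (𝕜 := ℝ) 2 p).fun_add (hasFDerivAt_apply 0 p)
  have hv₁ := (hasFDerivAt_apply (𝕜 := ℝ) 3 p).fun_add (hasFDerivAt_apply 1 p)
  have hu₂ := (hasFDerivAt_apply (𝕜 := ℝ) 2 p).fun_sub (hasFDerivAt_apply 0 p)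
  have hv₂ := (hasFDerivAt_apply (𝕜 := ℝ) 3 p).fun_sub (hasFDerivAt_apply 1 p)
  have H : HasFDerivAt (tauInv x) _ p :=
    (hasFDerivAt_pi (𝕜 := ℝ) (F' := fun _ => ℝ) (φ := fun i q => tauInv x q i)
      (φ' := ![_, _, _, _])).2 <| Fin.forall_fin_succ.2
      ⟨(hu₁.mul_sin_div hv₁ hp).const_add x.1, Fin.forall_fin_succ.2
      ⟨(hu₁.mul_cos_div hv₁ hp).const_add x.2, Fin.forall_fin_succ.2
      ⟨(hu₂.mul_sin_div hv₂ hm).const_add x.1, Fin.forall_fin_succ.2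
      ⟨(hu₂.mul_cos_div hv₂ hm).const_add x.2, fun i => i.elim0⟩⟩⟩⟩
  rw [H.fderiv]
  ext i j
  fin_cases i <;> fin_cases j <;> simp [tauInvJacobian]

theorem jacobian_tauInv_eq_four_general (x : ℝ × ℝ) (p : Fin 4 → ℝ)
    (hg1 : p 0 = 0) (hh1 : 0 < p 2) :
    Matrix.det (Matrix.of fun i j : Fin 4 =>
      fderiv ℝ (tauInv x) p (Pi.single j 1) i) = 4 := by
  have hp : p 2 + p 0 ≠ 0 := by simpa [hg1] using hh1.ne'
  have hm : p 2 - p 0 ≠ 0 := by simpa [hg1] using hh1.ne'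
  rw [jacobian_tauInv x hp hm, det_tauInvJacobian]

theorem jacobian_tauInv_eq_four (x : ℝ × ℝ) (p : Fin 4 → ℝ)
    (hg1 : p 0 = 0) (hg2 : p 1 = 0) (hh1 : 0 < p 2) :
    Matrix.det (Matrix.of fun i j : Fin 4 =>
      fderiv ℝ (tauInv x) p (Pi.single j 1) i) = 4 :=
  jacobian_tauInv_eq_four_general x p hg1 hh1
end

section
/- Let M be the 3×3 matrix M = 2·[[sin α cos β − α cos α cos β + β sin α sin β, cos α cos β, −sin α sin β], [sin α sin β − α cos α sin β − β sin α cos β, cos α sin β, sin α cos β], [cos α + α sin α, −sin α, 0]]. Then det M = 8 sin α. -/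
/-!
The first column of the matrix is `e_r - α e_θ - β (sin α e_φ)`, where the other two columns are
`e_θ` and `sin α e_φ` for the spherical frame `(e_r, e_θ, e_φ)` at polar angle `α` and azimuth `β`.
Subtracting multiples of the other columns leaves `det (e_r, e_θ, sin α e_φ) = sin α`.
-/

open Real

theorem det_fin_three_sub_mul_cols {R : Type*} [CommRing R] (u₀ u₁ u₂ v₀ v₁ v₂ w₀ w₁ w₂ a b : R) :
    Matrix.det !![u₀ - a * v₀ - b * w₀, v₀, w₀;
                  u₁ - a * v₁ - b * w₁, v₁, w₁;
                  u₂ - a * v₂ - b * w₂, v₂, w₂] =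
      Matrix.det !![u₀, v₀, w₀; u₁, v₁, w₁; u₂, v₂, w₂] := by
  simp only [Matrix.det_fin_three, Matrix.of_apply, Matrix.cons_val', Matrix.cons_val_zero,
    Matrix.cons_val_one, Matrix.cons_val_two, Matrix.empty_val', Matrix.cons_val_fin_one,
    Matrix.head_cons, Matrix.tail_cons, Matrix.head_fin_const]
  ring

noncomputable def sphericalFrame (α β : ℝ) : Matrix (Fin 3) (Fin 3) ℝ :=
  !![sin α * cos β, cos α * cos β, -(sin α * sin β);
     sin α * sin β, cos α * sin β, sin α * cos β;
     cos α, -sin α, 0]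

theorem det_sphericalFrame (α β : ℝ) : (sphericalFrame α β).det = sin α := by
  simp only [sphericalFrame, Matrix.det_fin_three, Matrix.of_apply, Matrix.cons_val',
    Matrix.cons_val_zero, Matrix.cons_val_one, Matrix.cons_val_two, Matrix.empty_val',
    Matrix.cons_val_fin_one, Matrix.head_cons, Matrix.tail_cons, Matrix.head_fin_const]
  linear_combination
    sin α * (sin α ^ 2 + cos α ^ 2) * sin_sq_add_cos_sq β + sin α * sin_sq_add_cos_sq α

theorem det_jacobian_block_3d (α β : ℝ) :
    Matrix.det ((2 : ℝ) •
      !![sin α * cos β - α * cos α * cos β + β * sin α * sin β, cos α * cos β, -(sin α * sin β);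
         sin α * sin β - α * cos α * sin β - β * sin α * cos β, cos α * sin β, sin α * cos β;
         cos α + α * sin α, -sin α, 0]) = 8 * sin α := by
  calc _ = 2 ^ 3 * (sphericalFrame α β).det := by
        rw [Matrix.det_smul, Fintype.card_fin, sphericalFrame]
        conv_rhs => rw [← det_fin_three_sub_mul_cols _ _ _ _ _ _ _ _ _ α β]
        ring_nf
    _ = 8 * sin α := by rw [det_sphericalFrame]; norm_num
end

section
/- Let X : [1,∞) × Ω → ℝ be a centered real-valued stochastic process with continuous sample paths such that |E[X(t₁)X(t₂)]| ≤ C(1 + |t₁ − t₂|)^{−ε} for some constants C > 0 and ε > 0 and all t₁, t₂ ≥ 1. Then (1/(K−1)) ∫₁^K X(t) dt → 0 almost surely as K → ∞. -/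
/-!
Write `S(L) = ∫ t in 1..1 + L, X t`. By Fubini, `E[S(L)²]` is the integral of the covariance over
the square `(1, 1 + L]²`; splitting the square along the band `|t - s| ≤ √L` bounds it by
`C (2 L^{3/2} + L^{2 - ε/2})`, so `E[(S(L) / L)²]` decays like a negative power of `L`. Along
`L_n = (n + 1)^m` with `m` large these bounds are summable, hence `∑ (S(L_n) / L_n)² < ∞` and
`S(L_n) / L_n → 0` almost surely. For `L_n ≤ L ≤ L_{n+1}` the average `S(L) / L` differs from
`S(L_n) / L_n` by at most `L_n⁻¹ ∫ t in 1 + L_n..1 + L_{n+1}, |X t|`, whose second moment is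
`O(C ((L_{n+1} - L_n) / L_n)²) = O(1 / n²)`, so this error also tends to zero almost surely.
-/

open MeasureTheory Filter Topology Function Set

theorem ae_tendsto_zero_of_integral_sq_le_summable {Ω : Type*} [MeasurableSpace Ω]
    {μ : Measure Ω} {Z : ℕ → Ω → ℝ} {b : ℕ → ℝ}
    (hZ : ∀ n, Integrable (fun ω => Z n ω ^ 2) μ) (hZb : ∀ n, ∫ ω, Z n ω ^ 2 ∂μ ≤ b n)
    (hb : Summable b) :
    ∀ᵐ ω ∂μ, Tendsto (fun n => Z n ω) atTop (𝓝 0) := by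
  have hmeas : ∀ n, AEMeasurable (fun ω => ENNReal.ofReal (Z n ω ^ 2)) μ :=
    fun n => (hZ n).aemeasurable.ennreal_ofReal
  have hfin : ∫⁻ ω, ∑' n, ENNReal.ofReal (Z n ω ^ 2) ∂μ ≠ ⊤ := by
    rw [lintegral_tsum hmeas]
    refine ne_top_of_le_ne_top (ENNReal.ofReal_ne_top (r := ∑' n, b n)) ?_
    rw [ENNReal.ofReal_tsum_of_nonneg
      (fun n => (integral_nonneg fun ω => sq_nonneg (Z n ω)).trans (hZb n)) hb]
    refine ENNReal.tsum_le_tsum fun n => ?_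
    rw [← ofReal_integral_eq_lintegral_ofReal (hZ n) (ae_of_all _ fun ω => sq_nonneg _)]
    exact ENNReal.ofReal_le_ofReal (hZb n)
  filter_upwards [ae_lt_top' (AEMeasurable.tsum hmeas) hfin] with ω hω
  have hsq : Tendsto (fun n => Z n ω ^ 2) atTop (𝓝 0) := by
    have := (ENNReal.tendsto_toReal ENNReal.zero_ne_top).comp
      (ENNReal.tendsto_atTop_zero_of_tsum_ne_top hω.ne)
    simpa [Function.comp_def, ENNReal.toReal_ofReal (sq_nonneg _)] using this
  exact tendsto_zero_iff_norm_tendsto_zero.2 (by simpa [Real.sqrt_sq_eq_abs] using hsq.sqrt)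

theorem sq_integral_eq_integral_prod {T : Type*} [MeasurableSpace T] {ν : Measure T}
    [SFinite ν] (f : T → ℝ) : (∫ t, f t ∂ν) ^ 2 = ∫ p, f p.1 * f p.2 ∂(ν.prod ν) := by
  rw [sq, integral_prod_mul]

section SecondMoment

variable {Ω T : Type*} [MeasurableSpace Ω] [MeasurableSpace T] {μ : Measure Ω} {ν : Measure T}

theorem integral_abs_mul_le_of_integral_sq_le {f g : Ω → ℝ} {M : ℝ}
    (hf2 : Integrable (fun ω => f ω ^ 2) μ) (hg2 : Integrable (fun ω => g ω ^ 2) μ)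
    (hfM : ∫ ω, f ω ^ 2 ∂μ ≤ M) (hgM : ∫ ω, g ω ^ 2 ∂μ ≤ M) :
    ∫ ω, |f ω * g ω| ∂μ ≤ M :=
  calc ∫ ω, |f ω * g ω| ∂μ ≤ ∫ ω, (f ω ^ 2 + g ω ^ 2) / 2 ∂μ := by
        refine integral_mono_of_nonneg (ae_of_all _ fun ω => abs_nonneg _)
          ((hf2.add hg2).div_const 2) (ae_of_all _ fun ω => ?_)
        simp only [abs_mul]
        nlinarith [sq_nonneg (|f ω| - |g ω|), sq_abs (f ω), sq_abs (g ω)]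
    _ = ((∫ ω, f ω ^ 2 ∂μ) + ∫ ω, g ω ^ 2 ∂μ) / 2 := by
        rw [integral_div, integral_add hf2 hg2]
    _ ≤ M := by linarith

variable [SFinite μ] [IsFiniteMeasure ν] {F : T → Ω → ℝ} {M : ℝ}

theorem integrable_mul_prod_of_integral_sq_le (hF : StronglyMeasurable (uncurry F))
    (hF2 : ∀ t, Integrable (fun ω => F t ω ^ 2) μ) (hM : ∀ t, ∫ ω, F t ω ^ 2 ∂μ ≤ M) :
    Integrable (fun q : (T × T) × Ω => F q.1.1 q.2 * F q.1.2 q.2) ((ν.prod ν).prod μ) := by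
  have hFt : ∀ t, AEStronglyMeasurable (F t) μ := fun t =>
    (hF.comp_measurable measurable_prodMk_left).aestronglyMeasurable
  have hmeas : StronglyMeasurable fun q : (T × T) × Ω => F q.1.1 q.2 * F q.1.2 q.2 :=
    (hF.comp_measurable (measurable_fst.fst.prodMk measurable_snd)).mul
      (hF.comp_measurable (measurable_fst.snd.prodMk measurable_snd))
  have hL2 : ∀ t, MemLp (F t) 2 μ := fun t =>
    (memLp_two_iff_integrable_sq (hFt t)).2 (hF2 t)
  rw [integrable_prod_iff hmeas.aestronglyMeasurable]
  refine ⟨ae_of_all _ fun p => (hL2 p.1).integrable_mul (hL2 p.2),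
    (integrable_const M).mono' hmeas.norm.integral_prod_right'.aestronglyMeasurable
      (ae_of_all _ fun p => ?_)⟩
  rw [Real.norm_of_nonneg (integral_nonneg fun ω => norm_nonneg _)]
  exact integral_abs_mul_le_of_integral_sq_le (hF2 p.1) (hF2 p.2) (hM p.1) (hM p.2)

theorem integrable_sq_integral (hF : StronglyMeasurable (uncurry F))
    (hF2 : ∀ t, Integrable (fun ω => F t ω ^ 2) μ) (hM : ∀ t, ∫ ω, F t ω ^ 2 ∂μ ≤ M) :
    Integrable (fun ω => (∫ t, F t ω ∂ν) ^ 2) μ := by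
  simpa only [sq_integral_eq_integral_prod (F · _)] using
    (integrable_mul_prod_of_integral_sq_le (ν := ν) hF hF2 hM).integral_prod_right

theorem integral_sq_integral_le (hF : StronglyMeasurable (uncurry F))
    (hF2 : ∀ t, Integrable (fun ω => F t ω ^ 2) μ) (hM : ∀ t, ∫ ω, F t ω ^ 2 ∂μ ≤ M)
    {g : T × T → ℝ} (hg : Integrable g (ν.prod ν))
    (hFg : ∀ᵐ p ∂(ν.prod ν), ∫ ω, F p.1 ω * F p.2 ω ∂μ ≤ g p) :
    ∫ ω, (∫ t, F t ω ∂ν) ^ 2 ∂μ ≤ ∫ p, g p ∂(ν.prod ν) := by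
  have hG := integrable_mul_prod_of_integral_sq_le (ν := ν) hF hF2 hM
  simp only [sq_integral_eq_integral_prod (F · _)]
  rw [← integral_integral_swap hG]
  exact integral_mono_ae hG.integral_prod_left hg hFg

end SecondMoment

theorem integrable_one_add_abs_sub_rpow_neg (ν : Measure (ℝ × ℝ)) [IsFiniteMeasure ν]
    {ε : ℝ} (hε : 0 ≤ ε) : Integrable (fun p : ℝ × ℝ => (1 + |p.1 - p.2|) ^ (-ε)) ν := by
  have hcont : Continuous fun p : ℝ × ℝ => (1 + |p.1 - p.2|) ^ (-ε) :=
    (continuous_const.add (continuous_fst.sub continuous_snd).abs).rpow_const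
      fun p => Or.inl (by linarith [abs_nonneg (p.1 - p.2)] : (1 : ℝ) + |p.1 - p.2| ≠ 0)
  refine (integrable_const (1 : ℝ)).mono' hcont.aestronglyMeasurable
    (ae_of_all _ fun p => ?_)
  rw [Real.norm_of_nonneg (by positivity)]
  exact Real.rpow_le_one_of_one_le_of_nonpos (by linarith [abs_nonneg (p.1 - p.2)])
    (by linarith)

theorem measure_prod_setOf_abs_sub_le (ν : Measure ℝ) [SFinite ν] (R : ℝ) (hν : ν ≤ volume) :
    (ν.prod ν) {p | |p.1 - p.2| ≤ R} ≤ ENNReal.ofReal (2 * R) * ν univ := by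
  have hband : MeasurableSet {p : ℝ × ℝ | |p.1 - p.2| ≤ R} :=
    measurableSet_le (continuous_fst.sub continuous_snd).abs.measurable measurable_const
  rw [Measure.prod_apply hband]
  calc ∫⁻ x, ν (Prod.mk x ⁻¹' {p | |p.1 - p.2| ≤ R}) ∂ν
      ≤ ∫⁻ _, ENNReal.ofReal (2 * R) ∂ν := lintegral_mono fun x => by
        have hslice : Prod.mk x ⁻¹' {p : ℝ × ℝ | |p.1 - p.2| ≤ R} = Icc (x - R) (x + R) := by
          ext y
          simp only [mem_preimage, mem_ofPred_eq, mem_Icc, abs_le]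
          constructor <;> rintro ⟨h₁, h₂⟩ <;> constructor <;> linarith
        rw [hslice]
        refine (hν _).trans ?_
        rw [Real.volume_Icc, show x + R - (x - R) = 2 * R by ring]
    _ = ENNReal.ofReal (2 * R) * ν univ := lintegral_const _

theorem integral_one_add_abs_sub_rpow_neg_le {a b R ε : ℝ} (hab : a ≤ b) (hR : 0 ≤ R)
    (hε : 0 ≤ ε) :
    ∫ p, (1 + |p.1 - p.2|) ^ (-ε)
        ∂((volume.restrict (Ioc a b)).prod (volume.restrict (Ioc a b)))
      ≤ 2 * R * (b - a) + (1 + R) ^ (-ε) * (b - a) ^ 2 := by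
  set ν := volume.restrict (Ioc a b)
  set band : Set (ℝ × ℝ) := {p | |p.1 - p.2| ≤ R}
  have hband : MeasurableSet band :=
    measurableSet_le (continuous_fst.sub continuous_snd).abs.measurable measurable_const
  have hνuniv : ν univ = ENNReal.ofReal (b - a) := by
    rw [Measure.restrict_apply_univ, Real.volume_Ioc]
  have hind : Integrable (band.indicator fun _ => (1 : ℝ)) (ν.prod ν) :=
    (integrable_const 1).indicator hband
  have hpoint : ∀ p : ℝ × ℝ,
      (1 + |p.1 - p.2|) ^ (-ε) ≤ band.indicator (fun _ => 1) p + (1 + R) ^ (-ε) := by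
    intro p
    by_cases hp : p ∈ band
    · rw [indicator_of_mem hp]
      have := Real.rpow_le_one_of_one_le_of_nonpos (x := 1 + |p.1 - p.2|) (z := -ε)
        (by linarith [abs_nonneg (p.1 - p.2)]) (by linarith)
      linarith [Real.rpow_nonneg (by linarith : (0 : ℝ) ≤ 1 + R) (-ε)]
    · rw [indicator_of_notMem hp, zero_add]
      simp only [band, mem_ofPred_eq, not_le] at hp
      exact Real.rpow_le_rpow_of_nonpos (by linarith) (by linarith) (by linarith)
  have hband_le : (ν.prod ν).real band ≤ 2 * R * (b - a) := by
    refine ENNReal.toReal_le_of_le_ofReal (by nlinarith) ?_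
    refine (measure_prod_setOf_abs_sub_le ν R Measure.restrict_le_self).trans_eq ?_
    rw [hνuniv, ← ENNReal.ofReal_mul (by linarith)]
  have huniv : (ν.prod ν).real univ = (b - a) ^ 2 := by
    rw [measureReal_def, ← univ_prod_univ, Measure.prod_prod, hνuniv,
      ← ENNReal.ofReal_mul (by linarith), ENNReal.toReal_ofReal (by nlinarith), sq]
  calc ∫ p, (1 + |p.1 - p.2|) ^ (-ε) ∂(ν.prod ν)
      ≤ ∫ p, (band.indicator (fun _ => 1) p + (1 + R) ^ (-ε)) ∂(ν.prod ν) :=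
        integral_mono (integrable_one_add_abs_sub_rpow_neg _ hε)
          (hind.add (integrable_const _)) hpoint
    _ = (ν.prod ν).real band + (1 + R) ^ (-ε) * (ν.prod ν).real univ := by
        rw [integral_add hind (integrable_const _), integral_indicator_const _ hband,
          integral_const, smul_eq_mul, mul_one, smul_eq_mul, mul_comm]
    _ ≤ 2 * R * (b - a) + (1 + R) ^ (-ε) * (b - a) ^ 2 := by
        rw [huniv]
        linarith

theorem summable_pow_rpow_neg {m : ℕ} {r : ℝ} (h : 1 < m * r) :
    Summable fun n : ℕ => (((n : ℝ) + 1) ^ m) ^ (-r) := by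
  refine ((Real.summable_one_div_nat_add_rpow 1 (m * r)).2 h).congr fun n => ?_
  have hn : (0 : ℝ) ≤ n + 1 := by positivity
  rw [abs_of_nonneg hn, ← Real.rpow_natCast, ← Real.rpow_mul hn, mul_neg, Real.rpow_neg hn,
    one_div]

theorem summable_sq_inv_pow_mul_succ_pow_sub_pow (m : ℕ) :
    Summable fun n : ℕ =>
      ((((n : ℝ) + 1) ^ m)⁻¹ * (((n : ℝ) + 2) ^ m - ((n : ℝ) + 1) ^ m)) ^ 2 := by
  obtain _ | k := m
  · simp
  have hbase : Summable fun n : ℕ => (1 / ((n : ℝ) + 1)) ^ 2 := by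
    simpa [div_pow] using (summable_nat_add_iff 1).2 (Real.summable_one_div_nat_pow.2 one_lt_two)
  refine Summable.of_nonneg_of_le (fun n => sq_nonneg _) (fun n => ?_)
    (hbase.mul_left ((((k + 1 : ℕ) : ℝ) * 2 ^ k) ^ 2))
  have hn : (0 : ℝ) < n + 1 := by positivity
  have hdiff : |((n : ℝ) + 2) ^ (k + 1) - ((n : ℝ) + 1) ^ (k + 1)|
      ≤ (k + 1 : ℕ) * (2 ^ k * ((n : ℝ) + 1) ^ k) := by
    refine (abs_pow_sub_pow_le _ _ _).trans ?_
    rw [abs_of_nonneg (by positivity : (0 : ℝ) ≤ n + 2), abs_of_nonneg hn.le,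
      max_eq_left (by linarith), ← mul_pow, show (n : ℝ) + 2 - (n + 1) = 1 by ring, abs_one,
      one_mul, Nat.add_sub_cancel]
    gcongr
    linarith
  rw [← mul_pow, ← sq_abs, abs_mul, abs_inv,
    abs_of_pos (by positivity : (0 : ℝ) < ((n : ℝ) + 1) ^ (k + 1))]
  refine pow_le_pow_left₀ (by positivity) ?_ 2
  calc (((n : ℝ) + 1) ^ (k + 1))⁻¹ * |((n : ℝ) + 2) ^ (k + 1) - ((n : ℝ) + 1) ^ (k + 1)|
      ≤ (((n : ℝ) + 1) ^ (k + 1))⁻¹ * ((k + 1 : ℕ) * (2 ^ k * ((n : ℝ) + 1) ^ k)) := by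
        gcongr
    _ = ((k + 1 : ℕ) : ℝ) * 2 ^ k * (1 / ((n : ℝ) + 1)) := by
      field_simp
      ring

theorem exists_ge_mem_Ico_of_tendsto_atTop {a : ℕ → ℝ} (ha : Tendsto a atTop atTop) {N : ℕ}
    {x : ℝ} (hx : a N ≤ x) : ∃ n ≥ N, x ∈ Ico (a n) (a (n + 1)) := by
  by_contra! h
  have hle : ∀ n ≥ N, a n ≤ x := fun n hn =>
    Nat.le_induction hx (fun k hk hak => not_lt.1 fun hlt => h k hk ⟨hak, hlt⟩) n hn
  obtain ⟨n, hxn, hNn⟩ := ((ha.eventually_gt_atTop x).and (eventually_ge_atTop N)).exists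
  exact (hle n hNn).not_gt hxn

theorem tendsto_zero_of_forall_mem_Ico_abs_le {f : ℝ → ℝ} {a c : ℕ → ℝ}
    (ha : Tendsto a atTop atTop) (hc : Tendsto c atTop (𝓝 0))
    (hf : ∀ n, ∀ x ∈ Ico (a n) (a (n + 1)), |f x| ≤ c n) : Tendsto f atTop (𝓝 0) := by
  rw [Metric.tendsto_atTop] at hc ⊢
  intro η hη
  obtain ⟨N, hN⟩ := hc η hη
  refine ⟨a N, fun x hx => ?_⟩
  obtain ⟨n, hnN, hxn⟩ := exists_ge_mem_Ico_of_tendsto_atTop ha hx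
  rw [Real.dist_eq, sub_zero]
  exact (hf n x hxn).trans_lt (lt_of_abs_lt (by simpa using hN n hnN))

theorem abs_inv_mul_integral_le {y : ℝ → ℝ} (hy : Continuous y) {x₀ p q u : ℝ} (hp : 0 < p)
    (hpu : p ≤ u) (huq : u ≤ q) :
    |u⁻¹ * ∫ t in x₀..x₀ + u, y t|
      ≤ |p⁻¹ * ∫ t in x₀..x₀ + p, y t| + p⁻¹ * ∫ t in x₀ + p..x₀ + q, |y t| := by
  have hu : 0 < u := hp.trans_le hpu
  have htail : |∫ t in x₀ + p..x₀ + u, y t| ≤ ∫ t in x₀ + p..x₀ + q, |y t| :=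
    (intervalIntegral.abs_integral_le_integral_abs (by linarith)).trans
      (intervalIntegral.integral_mono_interval le_rfl (by linarith) (by linarith)
        (ae_of_all _ fun t => abs_nonneg _) (hy.abs.intervalIntegrable _ _))
  rw [← intervalIntegral.integral_add_adjacent_intervals (hy.intervalIntegrable x₀ (x₀ + p))
    (hy.intervalIntegrable _ _), abs_mul, abs_mul, abs_inv, abs_inv, abs_of_pos hu, abs_of_pos hp]
  calc u⁻¹ * |(∫ t in x₀..x₀ + p, y t) + ∫ t in x₀ + p..x₀ + u, y t|
      ≤ p⁻¹ * (|∫ t in x₀..x₀ + p, y t| + ∫ t in x₀ + p..x₀ + q, |y t|) := by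
        gcongr
        exact (abs_add_le _ _).trans (by linarith)
    _ = _ := by ring

section TimeAverages

variable {Ω : Type*} [MeasurableSpace Ω] {μ : Measure Ω} [SFinite μ] {Y : ℝ → Ω → ℝ} {C : ℝ}

theorem integral_sq_setIntegral_le (hY : StronglyMeasurable (uncurry Y))
    (hY2 : ∀ t, Integrable (fun ω => Y t ω ^ 2) μ) (hYC : ∀ t, ∫ ω, Y t ω ^ 2 ∂μ ≤ C)
    {a b R ε : ℝ} (hab : a ≤ b) (hR : 0 ≤ R) (hε : 0 ≤ ε)
    (hcov : ∀ t ∈ Ioc a b, ∀ s ∈ Ioc a b,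
      ∫ ω, Y t ω * Y s ω ∂μ ≤ C * (1 + |t - s|) ^ (-ε)) :
    ∫ ω, (∫ t in Ioc a b, Y t ω) ^ 2 ∂μ
      ≤ C * (2 * R * (b - a) + (1 + R) ^ (-ε) * (b - a) ^ 2) := by
  have hC : 0 ≤ C := (integral_nonneg fun ω => sq_nonneg (Y a ω)).trans (hYC a)
  calc ∫ ω, (∫ t in Ioc a b, Y t ω) ^ 2 ∂μ
      ≤ ∫ p, C * (1 + |p.1 - p.2|) ^ (-ε)
          ∂((volume.restrict (Ioc a b)).prod (volume.restrict (Ioc a b))) := by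
        refine integral_sq_integral_le hY hY2 hYC
          ((integrable_one_add_abs_sub_rpow_neg _ hε).const_mul C) ?_
        rw [Measure.prod_restrict]
        filter_upwards [ae_restrict_mem (measurableSet_Ioc.prod measurableSet_Ioc)] with p hp
        exact hcov p.1 hp.1 p.2 hp.2
    _ ≤ C * (2 * R * (b - a) + (1 + R) ^ (-ε) * (b - a) ^ 2) := by
        rw [integral_const_mul]
        exact mul_le_mul_of_nonneg_left (integral_one_add_abs_sub_rpow_neg_le hab hR hε) hC

theorem integral_sq_average_le (hY : StronglyMeasurable (uncurry Y))
    (hY2 : ∀ t, Integrable (fun ω => Y t ω ^ 2) μ) (hYC : ∀ t, ∫ ω, Y t ω ^ 2 ∂μ ≤ C)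
    {ε : ℝ} (hε : 0 ≤ ε)
    (hcov : ∀ t ≥ 1, ∀ s ≥ 1, ∫ ω, Y t ω * Y s ω ∂μ ≤ C * (1 + |t - s|) ^ (-ε))
    {L : ℝ} (hL : 1 ≤ L) :
    ∫ ω, (L⁻¹ * ∫ t in Ioc 1 (1 + L), Y t ω) ^ 2 ∂μ
      ≤ C * (2 * L ^ (-(1 / 2 : ℝ)) + L ^ (-(ε / 2))) := by
  have hL0 : 0 < L := by linarith
  have hR : 0 < L ^ (1 / 2 : ℝ) := Real.rpow_pos_of_pos hL0 _
  have hbound := integral_sq_setIntegral_le hY hY2 hYC (a := 1) (b := 1 + L) (by linarith)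
    hR.le hε fun t ht s hs => hcov t ht.1.le s hs.1.le
  rw [add_sub_cancel_left] at hbound
  have hnear : (L⁻¹) ^ 2 * (2 * L ^ (1 / 2 : ℝ) * L) = 2 * L ^ (-(1 / 2 : ℝ)) := by
    have : L ^ (-(1 / 2 : ℝ)) * L = L ^ (1 / 2 : ℝ) := by
      rw [← Real.rpow_add_one hL0.ne']
      norm_num
    field_simp
    rw [← this]
    ring
  have hfar : (1 + L ^ (1 / 2 : ℝ)) ^ (-ε) ≤ L ^ (-(ε / 2)) :=
    calc (1 + L ^ (1 / 2 : ℝ)) ^ (-ε) ≤ (L ^ (1 / 2 : ℝ)) ^ (-ε) :=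
          Real.rpow_le_rpow_of_nonpos hR (by linarith) (by linarith)
      _ = L ^ (-(ε / 2)) := by rw [← Real.rpow_mul hL0.le]; ring_nf
  have hC : 0 ≤ C := (integral_nonneg fun ω => sq_nonneg (Y 1 ω)).trans (hYC 1)
  simp only [mul_pow, integral_const_mul]
  calc (L⁻¹) ^ 2 * ∫ ω, (∫ t in Ioc 1 (1 + L), Y t ω) ^ 2 ∂μ
      ≤ (L⁻¹) ^ 2 * (C * (2 * L ^ (1 / 2 : ℝ) * L + (1 + L ^ (1 / 2 : ℝ)) ^ (-ε) * L ^ 2)) :=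
        by gcongr
    _ = C * (2 * L ^ (-(1 / 2 : ℝ)) + (1 + L ^ (1 / 2 : ℝ)) ^ (-ε)) := by
        rw [← hnear]
        field_simp
    _ ≤ C * (2 * L ^ (-(1 / 2 : ℝ)) + L ^ (-(ε / 2))) := by gcongr

theorem ae_tendsto_average (hY : StronglyMeasurable (uncurry Y))
    (hY2 : ∀ t, Integrable (fun ω => Y t ω ^ 2) μ) (hYC : ∀ t, ∫ ω, Y t ω ^ 2 ∂μ ≤ C)
    {ε : ℝ} (hε : 0 ≤ ε)
    (hcov : ∀ t ≥ 1, ∀ s ≥ 1, ∫ ω, Y t ω * Y s ω ∂μ ≤ C * (1 + |t - s|) ^ (-ε))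
    {a : ℕ → ℝ} (ha : ∀ n, 1 ≤ a n) (hsum₁ : Summable fun n => a n ^ (-(1 / 2 : ℝ)))
    (hsum₂ : Summable fun n => a n ^ (-(ε / 2))) :
    ∀ᵐ ω ∂μ, Tendsto (fun n => (a n)⁻¹ * ∫ t in (1 : ℝ)..1 + a n, Y t ω) atTop (𝓝 0) := by
  have hIoc : ∀ n ω, ∫ t in (1 : ℝ)..1 + a n, Y t ω = ∫ t in Ioc 1 (1 + a n), Y t ω :=
    fun n ω => intervalIntegral.integral_of_le (by linarith [ha n])
  simp only [hIoc]
  refine ae_tendsto_zero_of_integral_sq_le_summable (fun n => ?_)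
    (fun n => integral_sq_average_le hY hY2 hYC hε hcov (ha n))
    (((hsum₁.mul_left 2).add hsum₂).mul_left C)
  simpa only [mul_pow] using (integrable_sq_integral hY hY2 hYC).const_mul ((a n)⁻¹ ^ 2)

theorem ae_tendsto_mul_integral_abs (hY : StronglyMeasurable (uncurry Y))
    (hY2 : ∀ t, Integrable (fun ω => Y t ω ^ 2) μ) (hYC : ∀ t, ∫ ω, Y t ω ^ 2 ∂μ ≤ C)
    {p q w : ℕ → ℝ} (hpq : ∀ n, p n ≤ q n)
    (hsum : Summable fun n => (w n * (q n - p n)) ^ 2) :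
    ∀ᵐ ω ∂μ, Tendsto (fun n => w n * ∫ t in p n..q n, |Y t ω|) atTop (𝓝 0) := by
  have hIoc : ∀ n ω, ∫ t in p n..q n, |Y t ω| = ∫ t in Ioc (p n) (q n), |Y t ω| :=
    fun n ω => intervalIntegral.integral_of_le (hpq n)
  simp only [hIoc]
  have hAbs : StronglyMeasurable (uncurry fun t ω => |Y t ω|) :=
    continuous_abs.comp_stronglyMeasurable hY
  have hAbs2 : ∀ t, Integrable (fun ω => |Y t ω| ^ 2) μ := by simpa only [sq_abs] using hY2
  have hAbsC : ∀ t, ∫ ω, |Y t ω| ^ 2 ∂μ ≤ C := by simpa only [sq_abs] using hYC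
  have hcross : ∀ t s, ∫ ω, |Y t ω| * |Y s ω| ∂μ ≤ C := fun t s => by
    simpa only [abs_mul] using
      integral_abs_mul_le_of_integral_sq_le (hY2 t) (hY2 s) (hYC t) (hYC s)
  refine ae_tendsto_zero_of_integral_sq_le_summable (fun n => ?_) (fun n => ?_)
    (hsum.mul_left C)
  · simpa only [mul_pow] using (integrable_sq_integral hAbs hAbs2 hAbsC).const_mul (w n ^ 2)
  · simp only [mul_pow, integral_const_mul]
    calc w n ^ 2 * ∫ ω, (∫ t in Ioc (p n) (q n), |Y t ω|) ^ 2 ∂μ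
        ≤ w n ^ 2 * ∫ _ : ℝ × ℝ, C
            ∂((volume.restrict (Ioc (p n) (q n))).prod (volume.restrict (Ioc (p n) (q n)))) := by
          gcongr
          exact integral_sq_integral_le hAbs hAbs2 hAbsC (integrable_const C)
            (ae_of_all _ fun x => hcross x.1 x.2)
      _ = C * (w n ^ 2 * (q n - p n) ^ 2) := by
          rw [integral_const, smul_eq_mul, measureReal_def, ← univ_prod_univ, Measure.prod_prod,
            Measure.restrict_apply_univ, Real.volume_Ioc, ENNReal.toReal_mul,
            ENNReal.toReal_ofReal (sub_nonneg.2 (hpq n))]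
          ring

theorem ae_tendsto_inv_mul_integral (hYmeas : ∀ t, Measurable (Y t))
    (hYcont : ∀ ω, Continuous fun t => Y t ω)
    (hY2 : ∀ t, Integrable (fun ω => Y t ω ^ 2) μ) (hYC : ∀ t, ∫ ω, Y t ω ^ 2 ∂μ ≤ C)
    {ε : ℝ} (hε : 0 < ε)
    (hcov : ∀ t ≥ 1, ∀ s ≥ 1, ∫ ω, Y t ω * Y s ω ∂μ ≤ C * (1 + |t - s|) ^ (-ε)) :
    ∀ᵐ ω ∂μ, Tendsto (fun u => u⁻¹ * ∫ t in (1 : ℝ)..1 + u, Y t ω) atTop (𝓝 0) := by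
  have hY : StronglyMeasurable (uncurry Y) :=
    stronglyMeasurable_uncurry_of_continuous_of_stronglyMeasurable hYcont
      fun t => (hYmeas t).stronglyMeasurable
  obtain ⟨m, hm⟩ := exists_nat_gt (max 2 (2 / ε))
  have hm₁ : 1 < m * (1 / 2 : ℝ) := by linarith [le_max_left 2 (2 / ε)]
  have hm₂ : 1 < m * (ε / 2) := by
    have := (le_max_right 2 (2 / ε)).trans_lt hm
    rw [div_lt_iff₀ hε] at this
    linarith
  set a : ℕ → ℝ := fun n => ((n : ℝ) + 1) ^ m
  have ha : Tendsto a atTop atTop :=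
    (tendsto_pow_atTop (by rintro rfl; norm_num at hm₁)).comp
      (tendsto_atTop_add_const_right _ 1 tendsto_natCast_atTop_atTop)
  have hA := ae_tendsto_average hY hY2 hYC hε.le hcov (a := a)
    (fun n => one_le_pow₀ (by linarith [n.cast_nonneg (α := ℝ)]))
    (summable_pow_rpow_neg hm₁) (summable_pow_rpow_neg hm₂)
  have hB := ae_tendsto_mul_integral_abs hY hY2 hYC (p := fun n => 1 + a n)
    (q := fun n => 1 + a (n + 1)) (w := fun n => (a n)⁻¹)
    (fun n => by simp only [a]; gcongr; linarith)
    ((summable_sq_inv_pow_mul_succ_pow_sub_pow m).congr fun n => by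
      simp only [a, Nat.cast_add, Nat.cast_one]; ring_nf)
  filter_upwards [hA, hB] with ω hAω hBω
  exact tendsto_zero_of_forall_mem_Ico_abs_le ha (by simpa using hAω.abs.add hBω)
    fun n u hu => abs_inv_mul_integral_le (hYcont ω) (by positivity) hu.1 hu.2.le

end TimeAverages

theorem ergodicity_decaying_correlations_general
    (Ω : Type*) [MeasureSpace Ω] [IsProbabilityMeasure (volume : Measure Ω)]
    (X : ℝ → Ω → ℝ) (C ε : ℝ) (hε : 0 < ε)
    (hmeas : ∀ t, Measurable (X t))
    (hpaths : ∀ ω : Ω, ContinuousOn (fun t => X t ω) (Set.Ici 1))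
    (hint : ∀ t₁ ≥ (1:ℝ), ∀ t₂ ≥ (1:ℝ), Integrable (fun ω => X t₁ ω * X t₂ ω))
    (hcov : ∀ t₁ ≥ (1:ℝ), ∀ t₂ ≥ (1:ℝ),
      |∫ ω, X t₁ ω * X t₂ ω| ≤ C * (1 + |t₁ - t₂|) ^ (-ε)) :
    ∀ᵐ ω : Ω, Tendsto (fun K => (K - 1)⁻¹ * ∫ t in (1:ℝ)..K, X t ω)
      atTop (𝓝 0) := by
  -- freezing the process before time 1 makes its paths continuous on all of `ℝ`
  set Y : ℝ → Ω → ℝ := fun t => X (max t 1)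
  have hYcov : ∀ t ≥ 1, ∀ s ≥ 1, ∫ ω, Y t ω * Y s ω ≤ C * (1 + |t - s|) ^ (-ε) :=
    fun t ht s hs => by
      simpa [Y, max_eq_left ht, max_eq_left hs] using (le_abs_self _).trans (hcov t ht s hs)
  have hY := ae_tendsto_inv_mul_integral (Y := Y) (fun t => hmeas _)
    (fun ω => (hpaths ω).comp_continuous (continuous_id.max continuous_const)
      fun t => le_max_right t 1)
    (fun t => by simpa only [sq] using hint _ (le_max_right t 1) _ (le_max_right t 1))
    (fun t => by
      simpa [sq] using (le_abs_self _).trans (hcov _ (le_max_right t 1) _ (le_max_right t 1)))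
    hε hYcov
  filter_upwards [hY] with ω hω
  refine (hω.comp (tendsto_atTop_add_const_right _ (-1) tendsto_id)).congr' ?_
  filter_upwards [eventually_ge_atTop 1] with K hK
  simp only [comp_apply, id, ← sub_eq_add_neg, add_sub_cancel]
  congr 1
  refine intervalIntegral.integral_congr fun t ht => ?_
  rw [uIcc_of_le hK] at ht
  simp only [Y, max_eq_left ht.1]

theorem ergodicity_decaying_correlations
    (Ω : Type*) [MeasureSpace Ω] [IsProbabilityMeasure (volume : Measure Ω)]
    (X : ℝ → Ω → ℝ) (C ε : ℝ) (hC : 0 < C) (hε : 0 < ε)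
    (hmeas : ∀ t, Measurable (X t))
    (hpaths : ∀ ω : Ω, ContinuousOn (fun t => X t ω) (Set.Ici 1))
    (hcen : ∀ t ≥ (1:ℝ), ∫ ω, X t ω = 0)
    (hint : ∀ t₁ ≥ (1:ℝ), ∀ t₂ ≥ (1:ℝ), Integrable (fun ω => X t₁ ω * X t₂ ω))
    (hcov : ∀ t₁ ≥ (1:ℝ), ∀ t₂ ≥ (1:ℝ),
      |∫ ω, X t₁ ω * X t₂ ω| ≤ C * (1 + |t₁ - t₂|) ^ (-ε)) :
    ∀ᵐ ω : Ω, Tendsto (fun K => (K - 1)⁻¹ * ∫ t in (1:ℝ)..K, X t ω)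
      atTop (𝓝 0) :=
  ergodicity_decaying_correlations_general Ω X C ε hε hmeas hpaths hint hcov
end
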